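/- arXiv:1808.06227 — 2 statements merged into one kernel-verified Lean document; each statement's English description precedes it below -/
import Mathlib

section
/- Let t₀ > 0, α < 1/2 and f ∈ L²((0,t₀)). Then for every t ∈ (0,t₀] the function x ↦ f(x)x^{α−1} is integrable on (t,t₀), and the function g(t) := −t^{1−α}∫ₜ^{t₀} f(x)x^{α−1}dx satisfies |g(t)| ≤ (1−2α)^{-1/2}‖f‖_{L²}·t^{1/2} for all t ∈ (0,t₀], and g is differentiable at almost every t ∈ (0,t₀) with g′(t) + (α − 1)g(t)/t = f(t) for almost every t ∈ (0,t₀). -/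
/-!
Cauchy–Schwarz on `(t, t₀)` against the weight `x ^ (α - 1)`, whose `L²(t, ∞)` norm is
`t ^ (α - 1/2) / √(1 - 2α)` because `2α - 2 < -1`, bounds the integral; the factor
`t ^ (1 - α)` turns this into `√t`. The differential equation is the product rule combined
with the Lebesgue differentiation theorem, applied on each `(ε, t₀)`, where the integrand is
integrable.
-/

open MeasureTheory Set Filter Topology

theorem abs_integral_mul_le_eLpNorm_mul_eLpNorm {X : Type*} [MeasurableSpace X] {μ : Measure X}
    {f g : X → ℝ} (hf : MemLp f 2 μ) (hg : MemLp g 2 μ) :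
    |∫ x, f x * g x ∂μ| ≤ (eLpNorm f 2 μ).toReal * (eLpNorm g 2 μ).toReal := by
  have h_inner : inner ℝ (hf.toLp f) (hg.toLp g) = ∫ x, f x * g x ∂μ := by
    rw [L2.inner_def]
    refine integral_congr_ae ?_
    filter_upwards [hf.coeFn_toLp, hg.coeFn_toLp] with x hfx hgx
    simp [hfx, hgx, mul_comm]
  rw [← h_inner, ← Lp.norm_toLp f hf, ← Lp.norm_toLp g hg]
  exact abs_real_inner_le_norm _ _

theorem ae_restrict_Ioo_integral_hasDerivAt_left {E : Type*} [NormedAddCommGroup E]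
    [NormedSpace ℝ E] [CompleteSpace E] {h : ℝ → E} {a b : ℝ}
    (hh : ∀ c ∈ Ioo a b, IntervalIntegrable h volume c b) :
    ∀ᵐ x ∂volume.restrict (Ioo a b), HasDerivAt (fun u => ∫ t in u..b, h t) (-h x) x := by
  rcases le_or_gt b a with hba | hab
  · simp [Ioo_eq_empty hba.not_gt]
  obtain ⟨u, -, hu_mem, hu_lim⟩ := exists_seq_strictAnti_tendsto' hab
  have h_ftc := ae_all_iff.2 fun n => (hh (u n) (hu_mem n)).ae_hasDerivAt_integral
  rw [ae_restrict_iff' measurableSet_Ioo]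
  filter_upwards [h_ftc] with x hx hx_mem
  obtain ⟨n, hn⟩ := (hu_lim.eventually (gt_mem_nhds hx_mem.1)).exists
  have := (hx n (Icc_subset_uIcc ⟨hn.le, hx_mem.2.le⟩) b right_mem_uIcc).neg
  simpa only [intervalIntegral.integral_symm b, Pi.neg_def] using this

theorem norm_rpow_rpow_two_eq_rpow_two_mul {x β : ℝ} (hx : 0 ≤ x) :
    ‖x ^ β‖ ^ (2 : ℝ) = x ^ (2 * β) := by
  rw [Real.norm_of_nonneg (Real.rpow_nonneg hx β), ← Real.rpow_mul hx, mul_comm]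

theorem memLp_two_rpow_Ioi {t β : ℝ} (ht : 0 < t) (hβ : β < -1 / 2) :
    MemLp (fun x : ℝ => x ^ β) 2 (volume.restrict (Ioi t)) := by
  refine (memLp_two_iff_integrable_sq_norm (by fun_prop)).2 ?_
  refine (integrableOn_Ioi_rpow_of_lt (a := 2 * β) (by linarith) ht).congr_fun
    (fun x hx => ?_) measurableSet_Ioi
  rw [← Real.rpow_two, norm_rpow_rpow_two_eq_rpow_two_mul (ht.trans hx).le]

theorem toReal_eLpNorm_two_rpow_Ioi {t β : ℝ} (ht : 0 < t) (hβ : β < -1 / 2) :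
    (eLpNorm (fun x : ℝ => x ^ β) 2 (volume.restrict (Ioi t))).toReal =
      t ^ (β + 1 / 2) / Real.sqrt (-(2 * β + 1)) := by
  have h_int : ∫ x in Ioi t, ‖x ^ β‖ ^ (2 : ℝ) = t ^ (2 * β + 1) / -(2 * β + 1) := by
    rw [setIntegral_congr_fun measurableSet_Ioi
      fun x hx => norm_rpow_rpow_two_eq_rpow_two_mul (ht.trans (mem_Ioi.1 hx)).le,
      integral_Ioi_rpow_of_lt (by linarith) ht, neg_div, div_neg]
  rw [(memLp_two_rpow_Ioi ht hβ).eLpNorm_eq_integral_rpow_norm two_ne_zero ENNReal.ofNat_ne_top,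
    ENNReal.toReal_ofNat, h_int,
    ENNReal.toReal_ofReal (Real.rpow_nonneg (div_nonneg (by positivity) (by linarith)) _),
    Real.div_rpow (by positivity) (by linarith), ← Real.rpow_mul ht.le, inv_eq_one_div,
    ← Real.sqrt_eq_rpow]
  ring_nf

theorem hasDerivAt_neg_rpow_one_sub_mul {F : ℝ → ℝ} {t α c : ℝ} (ht : 0 < t)
    (hF : HasDerivAt F (-(c * t ^ (α - 1))) t) :
    HasDerivAt (fun u => -u ^ (1 - α) * F u) (c - (α - 1) * (-t ^ (1 - α) * F t) / t) t := by
  have h_pow : t ^ (1 - α) * t ^ (α - 1) = 1 := by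
    rw [← Real.rpow_add ht, show 1 - α + (α - 1) = 0 by ring, Real.rpow_zero]
  refine ((Real.hasDerivAt_rpow_const (Or.inl ht.ne')).fun_neg.mul hF).congr_deriv ?_
  rw [Real.rpow_sub ht, Real.rpow_one]
  linear_combination c * h_pow

section

variable {t t₀ α : ℝ} {f : ℝ → ℝ}

theorem memLp_rpow_sub_one_Ioo (ht : 0 < t) (hα : α < 1 / 2) :
    MemLp (fun x : ℝ => x ^ (α - 1)) 2 (volume.restrict (Ioo t t₀)) :=
  (memLp_two_rpow_Ioi ht (by linarith)).mono_measure
    (Measure.restrict_mono Ioo_subset_Ioi_self le_rfl)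

theorem integrableOn_mul_rpow_sub_one (hf : MemLp f 2 (volume.restrict (Ioo 0 t₀))) (ht : 0 < t)
    (hα : α < 1 / 2) : IntegrableOn (fun x => f x * x ^ (α - 1)) (Ioo t t₀) :=
  (hf.mono_measure (Measure.restrict_mono (Ioo_subset_Ioo_left ht.le) le_rfl)).integrable_mul
    (memLp_rpow_sub_one_Ioo ht hα)

theorem rpow_one_sub_mul_abs_setIntegral_le (hf : MemLp f 2 (volume.restrict (Ioo 0 t₀)))
    (ht : 0 < t) (hα : α < 1 / 2) :
    t ^ (1 - α) * |∫ x in Ioo t t₀, f x * x ^ (α - 1)| ≤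
      (Real.sqrt (1 - 2 * α))⁻¹ * (eLpNorm f 2 (volume.restrict (Ioo 0 t₀))).toReal *
        Real.sqrt t := by
  have h_le : volume.restrict (Ioo t t₀) ≤ volume.restrict (Ioo 0 t₀) :=
    Measure.restrict_mono (Ioo_subset_Ioo_left ht.le) le_rfl
  have h_f : (eLpNorm f 2 (volume.restrict (Ioo t t₀))).toReal ≤
      (eLpNorm f 2 (volume.restrict (Ioo 0 t₀))).toReal :=
    ENNReal.toReal_mono hf.2.ne (eLpNorm_mono_measure f h_le)
  have h_w : (eLpNorm (fun x : ℝ => x ^ (α - 1)) 2 (volume.restrict (Ioo t t₀))).toReal ≤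
      t ^ (α - 1 / 2) / Real.sqrt (1 - 2 * α) :=
    calc _ ≤ (eLpNorm (fun x : ℝ => x ^ (α - 1)) 2 (volume.restrict (Ioi t))).toReal :=
          ENNReal.toReal_mono (memLp_two_rpow_Ioi ht (by linarith)).2.ne
            (eLpNorm_mono_measure _ (Measure.restrict_mono Ioo_subset_Ioi_self le_rfl))
      _ = _ := by rw [toReal_eLpNorm_two_rpow_Ioi ht (by linarith)]; ring_nf
  have h_pow : t ^ (1 - α) * t ^ (α - 1 / 2) = Real.sqrt t := by
    rw [← Real.rpow_add ht, Real.sqrt_eq_rpow]; ring_nf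
  calc t ^ (1 - α) * |∫ x in Ioo t t₀, f x * x ^ (α - 1)|
      ≤ t ^ (1 - α) * ((eLpNorm f 2 (volume.restrict (Ioo 0 t₀))).toReal *
          (t ^ (α - 1 / 2) / Real.sqrt (1 - 2 * α))) := by
        gcongr
        exact (abs_integral_mul_le_eLpNorm_mul_eLpNorm (hf.mono_measure h_le)
          (memLp_rpow_sub_one_Ioo ht hα)).trans
          (mul_le_mul h_f h_w (by positivity) (by positivity))
    _ = _ := by rw [← h_pow]; ring

end

theorem stmt_2_general (t₀ : ℝ) (α : ℝ) (hα : α < 1/2)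
    (f : ℝ → ℝ) (hf : MemLp f 2 (volume.restrict (Ioo (0:ℝ) t₀))) :
    (∀ t ∈ Ioc (0:ℝ) t₀, IntegrableOn (fun x => f x * x ^ (α - 1)) (Ioo t t₀)) ∧
    ∀ g : ℝ → ℝ,
      (∀ t : ℝ, g t = -(t ^ (1 - α)) * ∫ x in Ioo t t₀, f x * x ^ (α - 1)) →
      (∀ t ∈ Ioc (0:ℝ) t₀,
          |g t| ≤ (Real.sqrt (1 - 2*α))⁻¹ *
            (eLpNorm f 2 (volume.restrict (Ioo (0:ℝ) t₀))).toReal * Real.sqrt t) ∧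
      (∀ᵐ t ∂(volume.restrict (Ioo (0:ℝ) t₀)),
          ∃ d : ℝ, HasDerivAt g d t ∧ d + (α - 1) * g t / t = f t) := by
  refine ⟨fun t ht => integrableOn_mul_rpow_sub_one hf ht.1 hα, fun g hg => ⟨?_, ?_⟩⟩
  · rintro t ⟨ht, -⟩
    rw [hg, abs_mul, abs_neg, abs_of_nonneg (Real.rpow_nonneg ht.le _)]
    exact rpow_one_sub_mul_abs_setIntegral_le hf ht hα
  · have h_ii (c : ℝ) (hc : c ∈ Ioo 0 t₀) :
        IntervalIntegrable (fun x => f x * x ^ (α - 1)) volume c t₀ :=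
      (intervalIntegrable_iff_integrableOn_Ioo_of_le hc.2.le).2
        (integrableOn_mul_rpow_sub_one hf hc.1 hα)
    filter_upwards [ae_restrict_Ioo_integral_hasDerivAt_left h_ii,
      ae_restrict_mem measurableSet_Ioo] with t hF ht
    have hg_eq : g =ᶠ[𝓝 t] fun u => -u ^ (1 - α) * ∫ x in u..t₀, f x * x ^ (α - 1) := by
      filter_upwards [Iio_mem_nhds ht.2] with u hu
      rw [hg, intervalIntegral.integral_of_le (le_of_lt hu), integral_Ioc_eq_integral_Ioo]
    refine ⟨_, (hasDerivAt_neg_rpow_one_sub_mul ht.1 hF).congr_of_eventuallyEq hg_eq, ?_⟩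
    rw [hg_eq.eq_of_nhds]
    ring

/-- For `t₀ > 0`, `α < 1/2` and `f ∈ L²((0,t₀))`, the function
`g(t) = -t^{1-α} ∫ₜ^{t₀} f(x) x^{α-1} dx` is well defined, satisfies
`|g(t)| ≤ (1-2α)^{-1/2} ‖f‖_{L²} t^{1/2}` and solves
`g'(t) + (α-1) g(t)/t = f(t)` almost everywhere on `(0,t₀)`. -/
theorem stmt_2 (t₀ : ℝ) (ht₀ : 0 < t₀) (α : ℝ) (hα : α < 1/2)
    (f : ℝ → ℝ) (hf : MemLp f 2 (volume.restrict (Ioo (0:ℝ) t₀))) :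
    (∀ t ∈ Ioc (0:ℝ) t₀, IntegrableOn (fun x => f x * x ^ (α - 1)) (Ioo t t₀)) ∧
    ∀ g : ℝ → ℝ,
      (∀ t : ℝ, g t = -(t ^ (1 - α)) * ∫ x in Ioo t t₀, f x * x ^ (α - 1)) →
      (∀ t ∈ Ioc (0:ℝ) t₀,
          |g t| ≤ (Real.sqrt (1 - 2*α))⁻¹ *
            (eLpNorm f 2 (volume.restrict (Ioo (0:ℝ) t₀))).toReal * Real.sqrt t) ∧
      (∀ᵐ t ∂(volume.restrict (Ioo (0:ℝ) t₀)),
          ∃ d : ℝ, HasDerivAt g d t ∧ d + (α - 1) * g t / t = f t) :=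
  stmt_2_general t₀ α hα f hf
end

section
/- Suppose k ≥ 1, n ≠ 0 and a > 0. Let w : (0,∞) → ℂ² be continuous, differentiable on (0,1) and on (1,∞), and satisfy the adjoint ODE w′(r) = −(2/r)·w(r) − (1/r)·A·w(r) for all r ∈ (0,1) and w′(r) = −(2/r)·w(r) − B·w(r) for all r ∈ (1,∞). If ∫₀^∞ r²‖w(r)‖² dr < ∞, then w is identically zero. -/
open MeasureTheory Set

/-!
On `(0,1)` the equation is of Euler type, `r w' = -(2 + A) w`. A left eigenvector `(1, c)` of
`2 + A` with eigenvalue `1 - s`, where `s = ±μ` and `μ = √(k²/4 + n²)`, makes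
`r ^ (1 - s) (w₁ + c w₂)` constant. On `(1,∞)` the components decouple and `r² e^{a r} w₁`,
`r² e^{-a r} w₂` are constant. Square integrability for `r² dr` excludes the mode `w₂ ∼ e^{a r}`
at infinity and the mode of size `r ^ (-1 - μ)` at `0` (here `μ ≥ 1/2` because `k ≥ 1`).
By continuity at `r = 1` all four constants then vanish, and since the two eigenvectors are
independent (`μ ≠ 0`), `w = 0`.
-/

theorem HasDerivAt.fst {𝕜 E F : Type*} [NontriviallyNormedField 𝕜] [NormedAddCommGroup E]
    [NormedSpace 𝕜 E] [NormedAddCommGroup F] [NormedSpace 𝕜 F] {f : 𝕜 → E × F} {f' : E × F}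
    {x : 𝕜} (h : HasDerivAt f f' x) : HasDerivAt (fun t => (f t).1) f'.1 x :=
  hasFDerivAt_fst.comp_hasDerivAt (f := f) x h

theorem HasDerivAt.snd {𝕜 E F : Type*} [NontriviallyNormedField 𝕜] [NormedAddCommGroup E]
    [NormedSpace 𝕜 E] [NormedAddCommGroup F] [NormedSpace 𝕜 F] {f : 𝕜 → E × F} {f' : E × F}
    {x : 𝕜} (h : HasDerivAt f f' x) : HasDerivAt (fun t => (f t).2) f'.2 x :=
  hasFDerivAt_snd.comp_hasDerivAt (f := f) x h

theorem eq_of_hasDerivAt_eq_zero {E : Type*} [NormedAddCommGroup E] [NormedSpace ℝ E]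
    [CompleteSpace E] {f : ℝ → E} {a b : ℝ} (hab : a ≤ b) (hcont : ContinuousOn f (Icc a b))
    (hderiv : ∀ x ∈ Ioo a b, HasDerivAt f 0 x) : f a = f b := by
  have := intervalIntegral.integral_eq_sub_of_hasDerivAt_of_le hab hcont hderiv
    intervalIntegrable_const
  rwa [intervalIntegral.integral_zero, eq_comm, sub_eq_zero, eq_comm] at this

theorem hasDerivAt_rpow_mul_exp_mul {e b r : ℝ} (hr : 0 < r) :
    HasDerivAt (fun s => s ^ e * Real.exp (b * s))
      ((e / r + b) * (r ^ e * Real.exp (b * r))) r := by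
  have hexp : HasDerivAt (fun s => Real.exp (b * s)) (Real.exp (b * r) * b) r := by
    simpa using ((hasDerivAt_id r).const_mul b).exp
  refine ((Real.hasDerivAt_rpow_const (p := e) (Or.inl hr.ne')).mul hexp).congr_deriv ?_
  rw [Real.rpow_sub_one hr.ne']
  field_simp

theorem rpow_mul_exp_mul_eq_of_hasDerivAt {u : ℝ → ℂ} {e b r₀ r₁ : ℝ} (h₀ : 0 < r₀)
    (h₀₁ : r₀ ≤ r₁) (hu : ContinuousOn u (Icc r₀ r₁))
    (hu' : ∀ r ∈ Ioo r₀ r₁, HasDerivAt u (-((e / r + b) * u r)) r) :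
    ((r₀ ^ e * Real.exp (b * r₀) : ℝ) : ℂ) * u r₀ =
      ((r₁ ^ e * Real.exp (b * r₁) : ℝ) : ℂ) * u r₁ := by
  refine eq_of_hasDerivAt_eq_zero (f := fun s => ((s ^ e * Real.exp (b * s) : ℝ) : ℂ) * u s)
    h₀₁ ?_ fun r hr => ?_
  · refine ContinuousOn.mul ?_ hu
    refine Complex.continuous_ofReal.comp_continuousOn (ContinuousOn.mul ?_ (by fun_prop))
    exact ContinuousOn.rpow_const continuousOn_id fun x hx => Or.inl (h₀.trans_le hx.1).ne'
  · refine ((hasDerivAt_rpow_mul_exp_mul (e := e) (b := b) (h₀.trans hr.1)).ofReal_comp.mul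
      (hu' r hr)).congr_deriv ?_
    push_cast
    ring

theorem setLIntegral_ofReal_lt_top_of_le_mul {α : Type*} [MeasurableSpace α] {μ : Measure α}
    {s t : Set α} {f g : α → ℝ} {C : ℝ} (hs : MeasurableSet s) (hst : s ⊆ t) (hC : 0 ≤ C)
    (hfg : ∀ x ∈ s, f x ≤ C * g x) (hg : ∫⁻ x in t, ENNReal.ofReal (g x) ∂μ < ⊤) :
    ∫⁻ x in s, ENNReal.ofReal (f x) ∂μ < ⊤ := by
  calc ∫⁻ x in s, ENNReal.ofReal (f x) ∂μ
      ≤ ∫⁻ x in s, ENNReal.ofReal C * ENNReal.ofReal (g x) ∂μ :=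
        setLIntegral_mono' hs fun x hx => by
          rw [← ENNReal.ofReal_mul hC]; exact ENNReal.ofReal_le_ofReal (hfg x hx)
    _ = ENNReal.ofReal C * ∫⁻ x in s, ENNReal.ofReal (g x) ∂μ :=
        lintegral_const_mul' _ _ ENNReal.ofReal_ne_top
    _ ≤ ENNReal.ofReal C * ∫⁻ x in t, ENNReal.ofReal (g x) ∂μ := by gcongr
    _ < ⊤ := ENNReal.mul_lt_top ENNReal.ofReal_lt_top hg

theorem setLIntegral_Ioo_rpow_eq_top {p : ℝ} (hp : p ≤ -1) :
    ∫⁻ r in Ioo (0:ℝ) 1, ENNReal.ofReal (r ^ p) = ⊤ := by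
  by_contra h
  have hint := (lintegral_ofReal_ne_top_iff_integrable ?_ ?_).1 h
  · rw [← IntegrableOn, intervalIntegral.integrableOn_Ioo_rpow_iff zero_lt_one] at hint
    linarith
  · exact (ContinuousOn.rpow_const continuousOn_id fun x hx => Or.inl hx.1.ne').aestronglyMeasurable
      measurableSet_Ioo
  · filter_upwards [ae_restrict_mem measurableSet_Ioo] with x hx
    exact Real.rpow_nonneg hx.1.le p

theorem eq_zero_of_rpow_mul_eq {u : ℝ → ℂ} {e : ℝ} {K : ℂ} (he : 3 / 2 ≤ e)
    (hu : ∀ r ∈ Ioo (0:ℝ) 1, ((r ^ e : ℝ) : ℂ) * u r = K)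
    (hL2 : ∫⁻ r in Ioo (0:ℝ) 1, ENNReal.ofReal (r ^ 2 * ‖u r‖ ^ 2) < ⊤) : K = 0 := by
  by_contra hK
  have hK2 : 0 < ‖K‖ ^ 2 := by positivity
  have heq : ∀ r ∈ Ioo (0:ℝ) 1, r ^ 2 * ‖u r‖ ^ 2 = ‖K‖ ^ 2 * r ^ (2 - 2 * e) := by
    intro r hr
    have hpow : r ^ (2 - 2 * e) * (r ^ e) ^ 2 = r ^ 2 := by
      rw [← Real.rpow_natCast, ← Real.rpow_mul hr.1.le, ← Real.rpow_add hr.1, ← Real.rpow_two]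
      ring_nf
    rw [← hu r hr, norm_mul, Complex.norm_real, Real.norm_of_nonneg (Real.rpow_nonneg hr.1.le e),
      ← hpow]
    ring
  refine hL2.ne ?_
  calc ∫⁻ r in Ioo (0:ℝ) 1, ENNReal.ofReal (r ^ 2 * ‖u r‖ ^ 2)
      = ∫⁻ r in Ioo (0:ℝ) 1, ENNReal.ofReal (‖K‖ ^ 2) * ENNReal.ofReal (r ^ (2 - 2 * e)) :=
        setLIntegral_congr_fun measurableSet_Ioo fun r hr => by
          rw [heq r hr, ENNReal.ofReal_mul hK2.le]
    _ = ⊤ := by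
        rw [lintegral_const_mul' _ _ ENNReal.ofReal_ne_top,
          setLIntegral_Ioo_rpow_eq_top (by linarith),
          ENNReal.mul_top (ENNReal.ofReal_pos.2 hK2).ne']

theorem eq_zero_of_sq_mul_exp_mul_eq {u : ℝ → ℂ} {a : ℝ} {K : ℂ} (ha : 0 < a)
    (hu : ∀ r ∈ Ioi (1:ℝ), ((r ^ 2 * Real.exp (-(a * r)) : ℝ) : ℂ) * u r = K)
    (hL2 : ∫⁻ r in Ioi (1:ℝ), ENNReal.ofReal (r ^ 2 * ‖u r‖ ^ 2) < ⊤) : K = 0 := by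
  by_contra hK
  have hK2 : 0 < a ^ 2 * ‖K‖ ^ 2 := by positivity
  have hle : ∀ r ∈ Ioi (1:ℝ), a ^ 2 * ‖K‖ ^ 2 ≤ r ^ 2 * ‖u r‖ ^ 2 := by
    intro r hr
    have hr0 : 0 < r := zero_lt_one.trans hr
    have hnorm : r ^ 2 * ‖u r‖ = ‖K‖ * Real.exp (a * r) := by
      rw [← hu r hr, norm_mul, Complex.norm_real, Real.norm_of_nonneg (by positivity),
        Real.exp_neg]
      field_simp
    have hexp : a * r ≤ Real.exp (a * r) := by linarith [Real.add_one_le_exp (a * r)]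
    have : r ^ 2 * (a ^ 2 * ‖K‖ ^ 2) ≤ r ^ 2 * (r ^ 2 * ‖u r‖ ^ 2) := by
      have := mul_le_mul_of_nonneg_left hexp (norm_nonneg K)
      nlinarith [mul_nonneg (norm_nonneg K) (mul_pos ha hr0).le]
    exact le_of_mul_le_mul_left this (by positivity)
  refine hL2.ne (eq_top_iff.2 ?_)
  calc ⊤ = ∫⁻ _ in Ioi (1:ℝ), ENNReal.ofReal (a ^ 2 * ‖K‖ ^ 2) := by
        rw [setLIntegral_const, Real.volume_Ioi, ENNReal.mul_top (ENNReal.ofReal_pos.2 hK2).ne']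
    _ ≤ ∫⁻ r in Ioi (1:ℝ), ENNReal.ofReal (r ^ 2 * ‖u r‖ ^ 2) :=
        setLIntegral_mono' measurableSet_Ioi fun r hr => ENNReal.ofReal_le_ofReal (hle r hr)

theorem norm_add_mul_sq_le {R : Type*} [SeminormedRing R] (x y c : R) :
    ‖x + c * y‖ ^ 2 ≤ (1 + ‖c‖ ^ 2) * (‖x‖ ^ 2 + ‖y‖ ^ 2) := by
  have h : ‖x + c * y‖ ≤ ‖x‖ + ‖c‖ * ‖y‖ :=
    (norm_add_le _ _).trans (by gcongr; exact norm_mul_le _ _)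
  have := pow_le_pow_left₀ (norm_nonneg _) h 2
  nlinarith [sq_nonneg (‖c‖ * ‖x‖ - ‖y‖)]

theorem eq_zero_of_add_mul_eq_zero {K : Type*} [Field K] {x y c c' : K} (hc : c ≠ c')
    (h : x + c * y = 0) (h' : x + c' * y = 0) : x = 0 ∧ y = 0 := by
  have hy : y = 0 := by
    have : (c - c') * y = 0 := by linear_combination h - h'
    exact (mul_eq_zero.1 this).resolve_left (sub_ne_zero.2 hc)
  exact ⟨by simpa [hy] using h, hy⟩

section RadialAdjoint

open Complex

/-- The right-hand side `-(2/r) v - (1/r) A v` of the adjoint equation on `(0,1)`. -/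
noncomputable def innerRHS (k n r : ℝ) (v : ℂ × ℂ) : ℂ × ℂ :=
  (-(2/(r:ℂ)) * v.1 - (-(2 + (k:ℂ))/2 * v.1 + I * (n:ℂ) * v.2) / (r:ℂ),
    -(2/(r:ℂ)) * v.2 - (-(I * (n:ℂ)) * v.1 - (2 - (k:ℂ))/2 * v.2) / (r:ℂ))

/-- The right-hand side `-(2/r) v - B v` of the adjoint equation on `(1,∞)`. -/
noncomputable def outerRHS (a r : ℝ) (v : ℂ × ℂ) : ℂ × ℂ :=
  (-(2/(r:ℂ)) * v.1 - (a:ℂ) * v.1, -(2/(r:ℂ)) * v.2 + (a:ℂ) * v.2)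

variable {w : ℝ → ℂ × ℂ} {k n a : ℝ}

/-- For `s ^ 2 = k ^ 2 / 4 + n ^ 2`, `(1, eigenCoeff k n s)` is a left eigenvector of `2 + A`
with eigenvalue `1 - s`. -/
noncomputable def eigenCoeff (k n s : ℝ) : ℂ := (s - k / 2) / (I * n)

theorem eigenCoeff_mul (hn : n ≠ 0) (s : ℝ) : eigenCoeff k n s * (I * n) = s - k / 2 :=
  div_mul_cancel₀ _ (mul_ne_zero I_ne_zero (ofReal_ne_zero.2 hn))

theorem eigenCoeff_injective (hn : n ≠ 0) : Function.Injective (eigenCoeff k n) := by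
  intro s s' h
  have := congrArg (· * (I * n)) h
  simpa [eigenCoeff_mul hn] using this

theorem hasDerivAt_add_eigenCoeff_mul {s r : ℝ} (hn : n ≠ 0) (hs : s ^ 2 = k ^ 2 / 4 + n ^ 2)
    (hw : HasDerivAt w (innerRHS k n r (w r)) r) :
    HasDerivAt (fun t => (w t).1 + eigenCoeff k n s * (w t).2)
      (-((1 - s) / r * ((w r).1 + eigenCoeff k n s * (w r).2))) r := by
  set c := eigenCoeff k n s
  have hc : c * (I * n) = s - k / 2 := eigenCoeff_mul hn s
  have hsC : (s : ℂ) ^ 2 = k ^ 2 / 4 + n ^ 2 := by exact_mod_cast hs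
  have hc' : -(I * n) - c * (1 + k / 2) = (s - 1) * c :=
    mul_right_cancel₀ (mul_ne_zero I_ne_zero (ofReal_ne_zero.2 hn))
      (by linear_combination (-(s:ℂ) - k / 2) * hc - n ^ 2 * I_sq - hsC)
  refine (hw.fst.add (hw.snd.const_mul c)).congr_deriv ?_
  simp only [innerRHS]
  linear_combination ((w r).1 / r) * hc + ((w r).2 / r) * hc'

theorem rpow_mul_add_eigenCoeff_mul_eq_of_innerRHS {s : ℝ} (hn : n ≠ 0)
    (hs : s ^ 2 = k ^ 2 / 4 + n ^ 2) (hcont : ContinuousOn w (Ioi 0))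
    (hode : ∀ r ∈ Ioo (0:ℝ) 1, HasDerivAt w (innerRHS k n r (w r)) r) :
    ∀ r ∈ Ioc (0:ℝ) 1, ((r ^ (1 - s) : ℝ) : ℂ) * ((w r).1 + eigenCoeff k n s * (w r).2) =
      (w 1).1 + eigenCoeff k n s * (w 1).2 := by
  intro r hr
  have hsub : Icc r 1 ⊆ Ioi 0 := fun t ht => hr.1.trans_le ht.1
  have := rpow_mul_exp_mul_eq_of_hasDerivAt
    (u := fun t => (w t).1 + eigenCoeff k n s * (w t).2) (e := 1 - s) (b := 0) hr.1 hr.2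
    ((hcont.mono hsub).fst.add (continuousOn_const.mul (hcont.mono hsub).snd)) fun t ht => by
      simpa using hasDerivAt_add_eigenCoeff_mul hn hs (hode t ⟨hr.1.trans ht.1, ht.2⟩)
  simpa using this

theorem sq_mul_exp_mul_eq_of_outerRHS (hcont : ContinuousOn w (Ioi 0))
    (hode : ∀ r ∈ Ioi (1:ℝ), HasDerivAt w (outerRHS a r (w r)) r) :
    ∀ r ∈ Ici (1:ℝ), ((r ^ 2 * Real.exp (a * r) : ℝ) : ℂ) * (w r).1 = Real.exp a * (w 1).1 ∧
      ((r ^ 2 * Real.exp (-(a * r)) : ℝ) : ℂ) * (w r).2 = Real.exp (-a) * (w 1).2 := by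
  intro r hr
  have hsub : Icc 1 r ⊆ Ioi 0 := fun t ht => zero_lt_one.trans_le ht.1
  have h₁ := rpow_mul_exp_mul_eq_of_hasDerivAt (e := 2) (b := a) zero_lt_one hr
    (hcont.mono hsub).fst fun t ht =>
      (hode t ht.1).fst.congr_deriv (by simp only [outerRHS]; push_cast; ring)
  have h₂ := rpow_mul_exp_mul_eq_of_hasDerivAt (e := 2) (b := -a) zero_lt_one hr
    (hcont.mono hsub).snd fun t ht =>
      (hode t ht.1).snd.congr_deriv (by simp only [outerRHS]; push_cast; ring)
  exact ⟨by simpa using h₁.symm, by simpa using h₂.symm⟩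

theorem setLIntegral_sq_norm_add_mul_lt_top {s : Set ℝ} (hs : MeasurableSet s)
    (hs₀ : s ⊆ Ioi 0) (c : ℂ) (hL2 : ∫⁻ r in Ioi (0:ℝ),
        ENNReal.ofReal (r ^ 2 * (‖(w r).1‖ ^ 2 + ‖(w r).2‖ ^ 2)) < ⊤) :
    ∫⁻ r in s, ENNReal.ofReal (r ^ 2 * ‖(w r).1 + c * (w r).2‖ ^ 2) < ⊤ :=
  setLIntegral_ofReal_lt_top_of_le_mul (C := 1 + ‖c‖ ^ 2) hs hs₀ (by positivity) (fun r _ => by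
    linarith [mul_le_mul_of_nonneg_left (norm_add_mul_sq_le (w r).1 (w r).2 c) (sq_nonneg r)])
    hL2

theorem setLIntegral_sq_norm_snd_lt_top {s : Set ℝ} (hs : MeasurableSet s) (hs₀ : s ⊆ Ioi 0)
    (hL2 : ∫⁻ r in Ioi (0:ℝ),
        ENNReal.ofReal (r ^ 2 * (‖(w r).1‖ ^ 2 + ‖(w r).2‖ ^ 2)) < ⊤) :
    ∫⁻ r in s, ENNReal.ofReal (r ^ 2 * ‖(w r).2‖ ^ 2) < ⊤ :=
  setLIntegral_ofReal_lt_top_of_le_mul (C := 1) hs hs₀ zero_le_one (fun r _ => by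
    nlinarith [sq_nonneg r, sq_nonneg ‖(w r).1‖]) hL2

end RadialAdjoint
/-- Adjoint radial model: a continuous `w : (0,∞) → ℂ²` solving
`w' = -(2/r) w - (1/r) A w` on `(0,1)` and `w' = -(2/r) w - B w` on `(1,∞)`
(where `A` has rows `(-(2+k)/2, i n)`, `(-i n, -(2-k)/2)` and `B = diag(a, -a)`,
with `k ≥ 1`, `n ≠ 0`, `a > 0`) which is `L²` for the measure `r² dr`
vanishes identically. -/
theorem stmt_8 (k n a : ℝ) (hk : 1 ≤ k) (hn : n ≠ 0) (ha : 0 < a)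
    (w : ℝ → ℂ × ℂ) (hcont : ContinuousOn w (Ioi 0))
    (hode1 : ∀ r ∈ Ioo (0:ℝ) 1,
      HasDerivAt w
        ((-(2/(r:ℂ)) * (w r).1 -
            (-(2 + (k:ℂ))/2 * (w r).1 + Complex.I * (n:ℂ) * (w r).2) / (r:ℂ),
          -(2/(r:ℂ)) * (w r).2 -
            (-(Complex.I * (n:ℂ)) * (w r).1 - (2 - (k:ℂ))/2 * (w r).2) / (r:ℂ))) r)
    (hode2 : ∀ r ∈ Ioi (1:ℝ),
      HasDerivAt w
        ((-(2/(r:ℂ)) * (w r).1 - (a:ℂ) * (w r).1,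
          -(2/(r:ℂ)) * (w r).2 + (a:ℂ) * (w r).2)) r)
    (hL2 : ∫⁻ r in Ioi (0:ℝ),
        ENNReal.ofReal (r^2 * (‖(w r).1‖^2 + ‖(w r).2‖^2)) < ⊤) :
    ∀ r ∈ Ioi (0:ℝ), w r = 0 := by
  obtain ⟨μ, hμ, hμsq⟩ : ∃ μ : ℝ, 1 / 2 ≤ μ ∧ μ ^ 2 = k ^ 2 / 4 + n ^ 2 :=
    ⟨√(k ^ 2 / 4 + n ^ 2), Real.le_sqrt_of_sq_le (by nlinarith), Real.sq_sqrt (by positivity)⟩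
  have hm := rpow_mul_add_eigenCoeff_mul_eq_of_innerRHS (s := -μ) hn (by rw [neg_sq, hμsq])
    hcont hode1
  have hp := rpow_mul_add_eigenCoeff_mul_eq_of_innerRHS hn hμsq hcont hode1
  have houter := sq_mul_exp_mul_eq_of_outerRHS hcont hode2
  have hy₁ : (w 1).2 = 0 := by
    simpa using eq_zero_of_sq_mul_exp_mul_eq ha (fun r hr => (houter r (Ioi_subset_Ici_self hr)).2)
      (setLIntegral_sq_norm_snd_lt_top measurableSet_Ioi (Ioi_subset_Ioi zero_le_one) hL2)
  have hx₁ : (w 1).1 = 0 := by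
    simpa [hy₁] using eq_zero_of_rpow_mul_eq (by linarith)
      (fun r hr => hm r (Ioo_subset_Ioc_self hr))
      (setLIntegral_sq_norm_add_mul_lt_top measurableSet_Ioo Ioo_subset_Ioi_self _ hL2)
  intro r hr
  rcases le_or_gt r 1 with hr₁ | hr₁
  · have hm_r := hm r ⟨hr, hr₁⟩
    have hp_r := hp r ⟨hr, hr₁⟩
    simp only [hx₁, hy₁, mul_zero, add_zero, mul_eq_zero, Complex.ofReal_eq_zero,
      (Real.rpow_pos_of_pos hr _).ne', false_or] at hm_r hp_r
    obtain ⟨hx, hy⟩ := eq_zero_of_add_mul_eq_zero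
      ((eigenCoeff_injective hn).ne (by linarith)) hm_r hp_r
    exact Prod.ext hx hy
  · obtain ⟨hx, hy⟩ := houter r hr₁.le
    rw [hx₁, mul_zero] at hx
    rw [hy₁, mul_zero] at hy
    have hr₀ : 0 < r := hr
    exact Prod.ext ((mul_eq_zero.1 hx).resolve_left (Complex.ofReal_ne_zero.2 (by positivity)))
      ((mul_eq_zero.1 hy).resolve_left (Complex.ofReal_ne_zero.2 (by positivity)))
end
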